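/- arXiv:math-ph/0506067 — 2 statements merged into one kernel-verified Lean document; each statement's English description precedes it below -/
import Mathlib

section
/- Let Ω ⊆ ℝ² be open and v : ℝ² → ℝ be C² on Ω with v_x(t,x) ≠ 0, v_x(t,x)² + v_x(t,x) ≠ 0, satisfying v_t = v_xx / (v_x² + v_x) on Ω. Let (t₀,x₀) ∈ Ω and set y₀ = x₀ + v(t₀,x₀). Suppose w : ℝ² → ℝ is C² on a neighborhood of (t₀,y₀) and satisfies w(t, x + v(t,x)) = v(t,x) for all (t,x) in a neighborhood of (t₀,x₀) contained in Ω. Then w_y(t₀,y₀) ≠ 0 and w_t(t₀,y₀) = w_yy(t₀,y₀)/w_y(t₀,y₀). (Thus the point transformation t̃ = t, x̃ = x + v, ṽ = v reduces the nonlinear filtration equation with f = (v_x² + v_x)⁻¹ to the potential fast diffusion equation with f = v_x⁻¹.) -/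
/-!
Write `y = x + v`. Differentiating `w(t, x + v) = v` once and twice in `x` at a fixed time gives
`w_y (1 + v_x) = v_x` and `w_yy (1 + v_x)² + w_y v_xx = v_xx`, so that
`w_y = v_x / (1 + v_x)` and `w_yy = v_xx / (1 + v_x)³`; differentiating it in `t` gives
`w_t + v_t w_y = v_t`, so that `w_t = v_t / (1 + v_x) = v_xx / (v_x (1 + v_x)²) = w_yy / w_y`.
-/

/-- Partial derivative with respect to the first variable (time). -/
noncomputable def pt (u : ℝ × ℝ → ℝ) (p : ℝ × ℝ) : ℝ :=
  deriv (fun s => u (s, p.2)) p.1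

/-- Partial derivative with respect to the second variable (space). -/
noncomputable def px (u : ℝ × ℝ → ℝ) (p : ℝ × ℝ) : ℝ :=
  deriv (fun y => u (p.1, y)) p.2

open Filter Topology

theorem deriv_deriv_comp {𝕜 : Type*} [NontriviallyNormedField 𝕜] {g f : 𝕜 → 𝕜} {x : 𝕜}
    (hg : ContDiffAt 𝕜 2 g (f x)) (hf : ContDiffAt 𝕜 2 f x) :
    deriv (deriv (g ∘ f)) x =
      deriv (deriv g) (f x) * deriv f x ^ 2 + deriv g (f x) * deriv (deriv f) x := by
  simpa only [iteratedDeriv_succ, iteratedDeriv_zero] using iteratedDeriv_comp_two hg hf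

theorem deriv_relations_of_comp_id_add_eventuallyEq {V W : ℝ → ℝ} {x₀ : ℝ}
    (hV : ContDiffAt ℝ 2 V x₀) (hW : ContDiffAt ℝ 2 W (x₀ + V x₀))
    (h : ∀ᶠ x in 𝓝 x₀, W (x + V x) = V x) :
    deriv W (x₀ + V x₀) * (1 + deriv V x₀) = deriv V x₀ ∧
      deriv (deriv W) (x₀ + V x₀) * (1 + deriv V x₀) ^ 2 +
        deriv W (x₀ + V x₀) * deriv (deriv V) x₀ = deriv (deriv V) x₀ := by
  set g : ℝ → ℝ := fun x => x + V x
  have hg : ContDiffAt ℝ 2 g x₀ := contDiffAt_id.add hV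
  have hcomp : W ∘ g =ᶠ[𝓝 x₀] V := h
  have hg' : deriv g =ᶠ[𝓝 x₀] fun x => 1 + deriv V x := by
    filter_upwards [hV.eventually (by simp)] with x hx
    exact ((hasDerivAt_id x).add (hx.differentiableAt two_ne_zero).hasDerivAt).deriv
  have hg'' : deriv (deriv g) x₀ = deriv (deriv V) x₀ := hg'.deriv_eq.trans (deriv_const_add 1)
  have hV' := hcomp.deriv_eq
  have hV'' := hcomp.deriv.deriv_eq
  rw [deriv_comp x₀ (hW.differentiableAt two_ne_zero) (hg.differentiableAt two_ne_zero),
    hg'.self_of_nhds] at hV'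
  rw [deriv_deriv_comp (f := g) hW hg, hg'.self_of_nhds, hg''] at hV''
  exact ⟨hV', hV''⟩

theorem pt_eq_fderiv {w : ℝ × ℝ → ℝ} {p : ℝ × ℝ} (hw : DifferentiableAt ℝ w p) :
    pt w p = fderiv ℝ w p (1, 0) :=
  (hw.hasFDerivAt.comp_hasDerivAt p.1 ((hasDerivAt_id p.1).prodMk (hasDerivAt_const p.1 p.2))).deriv

theorem px_eq_fderiv {w : ℝ × ℝ → ℝ} {p : ℝ × ℝ} (hw : DifferentiableAt ℝ w p) :
    px w p = fderiv ℝ w p (0, 1) :=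
  (hw.hasFDerivAt.comp_hasDerivAt p.2 ((hasDerivAt_const p.2 p.1).prodMk (hasDerivAt_id p.2))).deriv

theorem hasDerivAt_comp_graph {w : ℝ × ℝ → ℝ} {φ : ℝ → ℝ} {φ' t : ℝ}
    (hw : DifferentiableAt ℝ w (t, φ t)) (hφ : HasDerivAt φ φ' t) :
    HasDerivAt (fun s => w (s, φ s)) (pt w (t, φ t) + φ' * px w (t, φ t)) t := by
  have hsplit : ((1 : ℝ), φ') = (1, 0) + φ' • (0, 1) := by simp
  have := hw.hasFDerivAt.comp_hasDerivAt t ((hasDerivAt_id t).prodMk hφ)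
  rwa [hsplit, map_add, map_smul, ← pt_eq_fderiv hw, ← px_eq_fderiv hw, smul_eq_mul] at this

theorem ne_zero_and_eq_div_of_transformation_relations {vx vxx vt wy wyy wt : ℝ}
    (hvx : vx ^ 2 + vx ≠ 0) (hwy : wy * (1 + vx) = vx)
    (hwyy : wyy * (1 + vx) ^ 2 + wy * vxx = vxx) (hwt : wt + vt * wy = vt)
    (hvt : vt = vxx / (vx ^ 2 + vx)) :
    wy ≠ 0 ∧ wt = wyy / wy := by
  have hvx0 : vx ≠ 0 := fun h => hvx (by simp [h])
  have hvx1 : 1 + vx ≠ 0 := fun h => hvx (by linear_combination vx * h)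
  have hwy0 : wy ≠ 0 := by rintro rfl; exact hvx0 (by linarith)
  rw [eq_div_iff hvx] at hvt
  refine ⟨hwy0, (eq_div_iff hwy0).2 (mul_left_cancel₀ (pow_ne_zero 2 hvx1) ?_)⟩
  linear_combination (1 + vx) * wt * hwy + (vx ^ 2 + vx) * hwt - hwyy - (wy - 1) * hvt

theorem filtration_to_potential_fast_diffusion_general
    (Ω : Set (ℝ × ℝ))
    (v : ℝ × ℝ → ℝ) (hv : ContDiffOn ℝ 2 v Ω)
    (hvx' : ∀ p ∈ Ω, (px v p) ^ 2 + px v p ≠ 0)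
    (hpde : ∀ p ∈ Ω, pt v p = px (px v) p / ((px v p) ^ 2 + px v p))
    (t₀ x₀ : ℝ)
    (y₀ : ℝ) (hy₀ : y₀ = x₀ + v (t₀, x₀))
    (w : ℝ × ℝ → ℝ) (hw : ContDiffAt ℝ 2 w (t₀, y₀))
    (htr : ∀ᶠ p in nhds (t₀, x₀), p ∈ Ω ∧ w (p.1, p.2 + v p) = v p) :
    px w (t₀, y₀) ≠ 0 ∧ pt w (t₀, y₀) = px (px w) (t₀, y₀) / px w (t₀, y₀) := by
  subst hy₀
  have hmem : (t₀, x₀) ∈ Ω := htr.self_of_nhds.1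
  have hv₀ : ContDiffAt ℝ 2 v (t₀, x₀) := hv.contDiffAt (htr.mono fun _ h => h.1)
  obtain ⟨hwy, hwyy⟩ := deriv_relations_of_comp_id_add_eventuallyEq
    (hv₀.comp x₀ (contDiffAt_const.prodMk contDiffAt_id))
    (hw.comp _ (contDiffAt_const.prodMk contDiffAt_id))
    (((continuous_const.prodMk continuous_id).tendsto x₀).eventually htr |>.mono fun _ h => h.2)
  have hvt : HasDerivAt (fun t => v (t, x₀)) (pt v (t₀, x₀)) t₀ :=
    ((hv₀.comp t₀ (contDiffAt_id.prodMk contDiffAt_const)).differentiableAt two_ne_zero).hasDerivAt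
  have hwt : pt w (t₀, x₀ + v (t₀, x₀)) + pt v (t₀, x₀) * px w (t₀, x₀ + v (t₀, x₀)) =
      pt v (t₀, x₀) := by
    refine (hasDerivAt_comp_graph (hw.differentiableAt two_ne_zero) (hvt.const_add x₀)).unique
      (hvt.congr_of_eventuallyEq ?_)
    filter_upwards [((continuous_id.prodMk continuous_const).tendsto t₀).eventually htr]
      with t ht
    simpa [add_comm] using ht.2
  exact ne_zero_and_eq_div_of_transformation_relations (hvx' _ hmem) hwy hwyy hwt (hpde _ hmem)

/-- The point transformation `t̃ = t, x̃ = x + v, ṽ = v` reduces the nonlinear filtration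
equation with `f = (v_x² + v_x)⁻¹` to the potential fast diffusion equation
`w_t = w_yy / w_y`. -/
theorem filtration_to_potential_fast_diffusion
    (Ω : Set (ℝ × ℝ)) (hΩ : IsOpen Ω)
    (v : ℝ × ℝ → ℝ) (hv : ContDiffOn ℝ 2 v Ω)
    (hvx : ∀ p ∈ Ω, px v p ≠ 0)
    (hvx' : ∀ p ∈ Ω, (px v p) ^ 2 + px v p ≠ 0)
    (hpde : ∀ p ∈ Ω, pt v p = px (px v) p / ((px v p) ^ 2 + px v p))
    (t₀ x₀ : ℝ) (hmem : (t₀, x₀) ∈ Ω)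
    (y₀ : ℝ) (hy₀ : y₀ = x₀ + v (t₀, x₀))
    (w : ℝ × ℝ → ℝ) (hw : ContDiffAt ℝ 2 w (t₀, y₀))
    (htr : ∀ᶠ p in nhds (t₀, x₀), p ∈ Ω ∧ w (p.1, p.2 + v p) = v p) :
    px w (t₀, y₀) ≠ 0 ∧ pt w (t₀, y₀) = px (px w) (t₀, y₀) / px w (t₀, y₀) :=
  filtration_to_potential_fast_diffusion_general Ω v hv hvx' hpde t₀ x₀ y₀ hy₀ w hw htr
end

section
/- Define χ(t,x) = tanh(2t)·tanh(x), and let Ω = {(t,x,v) ∈ ℝ³ : tanh v ≠ χ(t,x)}. Define on Ω: ξ(t,x,v) = −2(1 − χ·tanh v)/(tanh v − χ) and θ(t,x,v) = −(χ_t + χ_x·ξ)/(1 − χ²), where χ_t = 2·tanh(x)/cosh²(2t) and χ_x = tanh(2t)/cosh²(x) (note that 1 − χ² > 0 everywhere). Then the pair (ξ, θ) satisfies the determining system for reduction operators of the potential fast diffusion equation on Ω. (This verifies Case 5 with χ = tanh(2t)tanh(x) of the classification theorem of non-Lie reduction operators.) -/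
/-!
In the coordinates `a = tanh 2t`, `b = tanh x`, `c = tanh v` the operators `∂_t`, `∂_x`,
`∂_v` become `2(1 - a²)∂_a`, `(1 - b²)∂_b`, `(1 - c²)∂_c`, and since `1/cosh² = 1 - tanh²`
the pair becomes rational: `ξ = -2(1 - abc)/(c - ab)` and `θ = 2(a - bc)/(c - ab)`. Every
derivative occurring in the determining system is then a polynomial over a power of `c - ab`,
and the four equations become identities between rational functions of `a, b, c`.
-/

/-- Partial derivative with respect to the first variable `t`. -/
noncomputable def pt3 (f : ℝ × ℝ × ℝ → ℝ) (p : ℝ × ℝ × ℝ) : ℝ :=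
  deriv (fun t => f (t, p.2.1, p.2.2)) p.1

/-- Partial derivative with respect to the second variable `x`. -/
noncomputable def px3 (f : ℝ × ℝ × ℝ → ℝ) (p : ℝ × ℝ × ℝ) : ℝ :=
  deriv (fun x => f (p.1, x, p.2.2)) p.2.1

/-- Partial derivative with respect to the third variable `v`. -/
noncomputable def pv3 (f : ℝ × ℝ × ℝ → ℝ) (p : ℝ × ℝ × ℝ) : ℝ :=
  deriv (fun v => f (p.1, p.2.1, v)) p.2.2

/-- The determining system for reduction operators `Q = ∂_t + ξ∂_x + θ∂_v`
of the potential fast diffusion equation `v_t = v_xx / v_x`: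
(i) `ξ_vv = ξ ξ_v`; (ii) `ξ_t = 2ξ_xv − θ_vv − θ_v ξ + θ ξ_v − ξ ξ_x`;
(iii) `θ_xx = θ θ_x`; (iv) `θ_t = 2θ_xv − ξ_xx − ξ_x θ + ξ θ_x − θ θ_v`. -/
def DeterminingSystem (ξ θ : ℝ × ℝ × ℝ → ℝ) (Ω : Set (ℝ × ℝ × ℝ)) : Prop :=
  ∀ p ∈ Ω,
    pv3 (pv3 ξ) p = ξ p * pv3 ξ p ∧
    pt3 ξ p =
      2 * pv3 (px3 ξ) p - pv3 (pv3 θ) p - pv3 θ p * ξ p + θ p * pv3 ξ p - ξ p * px3 ξ p ∧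
    px3 (px3 θ) p = θ p * px3 θ p ∧
    pt3 θ p =
      2 * pv3 (px3 θ) p - px3 (px3 ξ) p - px3 ξ p * θ p + ξ p * px3 θ p - θ p * pv3 θ p

open Real Set Filter

theorem Real.hasDerivAt_tanh (x : ℝ) : HasDerivAt tanh (1 - tanh x ^ 2) x := by
  have := (cosh_pos x).ne'
  rw [show tanh = fun y => sinh y / cosh y from funext tanh_eq_sinh_div_cosh]
  refine ((hasDerivAt_sinh x).div (hasDerivAt_cosh x) this).congr_deriv ?_
  field_simp

theorem Real.hasDerivAt_tanh_two_mul (t : ℝ) :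
    HasDerivAt (fun t => tanh (2 * t)) (2 * (1 - tanh (2 * t) ^ 2)) t :=
  ((hasDerivAt_tanh (2 * t)).comp t ((hasDerivAt_id t).const_mul 2)).congr_deriv (by ring)

@[fun_prop]
theorem Real.continuous_tanh : Continuous tanh :=
  continuous_iff_continuousAt.2 fun x => (hasDerivAt_tanh x).continuousAt

theorem Real.div_cosh_sq (y x : ℝ) : y / cosh x ^ 2 = y * (1 - tanh x ^ 2) := by
  have := (cosh_pos x).ne'
  rw [tanh_eq_sinh_div_cosh]
  field_simp
  linear_combination (-y) * cosh_sq_sub_sinh_sq x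

theorem Real.one_sub_sq_tanh_mul_tanh_pos (y x : ℝ) : 0 < 1 - (tanh y * tanh x) ^ 2 := by
  rw [mul_pow]
  nlinarith [tanh_sq_lt_one y, tanh_sq_lt_one x, sq_nonneg (tanh y), sq_nonneg (tanh x)]

theorem HasDerivAt.quadratic_div_linear_pow {T : ℝ → ℝ} {T' u : ℝ} (hT : HasDerivAt T T' u)
    (p q r m n : ℝ) (k : ℕ) (h : m + n * T u ≠ 0) :
    HasDerivAt (fun u => (p + q * T u + r * T u ^ 2) / (m + n * T u) ^ k)
      (((q + 2 * r * T u) * (m + n * T u) - k * n * (p + q * T u + r * T u ^ 2)) /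
        (m + n * T u) ^ (k + 1) * T') u := by
  have hP : HasDerivAt (fun y => p + q * y + r * y ^ 2) (q + 2 * r * T u) (T u) :=
    ((((hasDerivAt_id _).const_mul q).const_add p).fun_add
      ((hasDerivAt_pow 2 _).const_mul r)).congr_deriv (by simp; ring)
  have hL : HasDerivAt (fun y => m + n * y) n (T u) := by
    simpa using ((hasDerivAt_id _).const_mul n).const_add m
  refine ((hP.div (hL.fun_pow k) (pow_ne_zero k h)).comp u hT).congr_deriv ?_
  rw [div_mul_eq_mul_div, div_mul_eq_mul_div,
    div_eq_div_iff (pow_ne_zero _ (pow_ne_zero _ h)) (pow_ne_zero _ h)]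
  rcases k with _ | k
  · simp only [pow_zero, CharP.cast_eq_zero]
    ring
  · simp only [Nat.add_sub_cancel, Nat.cast_add, Nat.cast_one]
    ring

section PartialDerivatives

variable {F G : ℝ × ℝ × ℝ → ℝ} {U : Set (ℝ × ℝ × ℝ)}

theorem Set.EqOn.pt3 (hU : IsOpen U) (h : EqOn F G U) : EqOn (pt3 F) (pt3 G) U := by
  intro p hp
  have hγ : Continuous fun t : ℝ => (t, p.2.1, p.2.2) := by fun_prop
  exact EventuallyEq.deriv_eq <|
    (hγ.tendsto p.1).eventually (h.eventuallyEq_of_mem (hU.mem_nhds hp))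

theorem Set.EqOn.px3 (hU : IsOpen U) (h : EqOn F G U) : EqOn (px3 F) (px3 G) U := by
  intro p hp
  have hγ : Continuous fun x : ℝ => (p.1, x, p.2.2) := by fun_prop
  exact EventuallyEq.deriv_eq <|
    (hγ.tendsto p.2.1).eventually (h.eventuallyEq_of_mem (hU.mem_nhds hp))

theorem Set.EqOn.pv3 (hU : IsOpen U) (h : EqOn F G U) : EqOn (pv3 F) (pv3 G) U := by
  intro p hp
  have hγ : Continuous fun v : ℝ => (p.1, p.2.1, v) := by fun_prop
  exact EventuallyEq.deriv_eq <|
    (hγ.tendsto p.2.2).eventually (h.eventuallyEq_of_mem (hU.mem_nhds hp))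

end PartialDerivatives

theorem DeterminingSystem.congr {ξ θ ξ' θ' : ℝ × ℝ × ℝ → ℝ} {Ω : Set (ℝ × ℝ × ℝ)}
    (h : DeterminingSystem ξ' θ' Ω) (hΩ : IsOpen Ω) (hξ : EqOn ξ ξ' Ω)
    (hθ : EqOn θ θ' Ω) :
    DeterminingSystem ξ θ Ω := by
  intro p hp
  have hξv := hξ.pv3 hΩ
  have hξx := hξ.px3 hΩ
  have hθv := hθ.pv3 hΩ
  have hθx := hθ.px3 hΩ
  rw [hξ hp, hθ hp, hξv hp, hξx hp, hθv hp, hθx hp, hξ.pt3 hΩ hp, hθ.pt3 hΩ hp,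
    hξv.pv3 hΩ hp, hξx.pv3 hΩ hp, hξx.px3 hΩ hp, hθv.pv3 hΩ hp, hθx.pv3 hΩ hp,
    hθx.px3 hΩ hp]
  exact h p hp

namespace TanhCoordinates

noncomputable def lift (R : ℝ → ℝ → ℝ → ℝ) (p : ℝ × ℝ × ℝ) : ℝ :=
  R (tanh (2 * p.1)) (tanh p.2.1) (tanh p.2.2)

def regularSet : Set (ℝ × ℝ × ℝ) := {p | tanh p.2.2 ≠ tanh (2 * p.1) * tanh p.2.1}

theorem isOpen_regularSet : IsOpen regularSet :=
  isOpen_ne_fun (by fun_prop) (by fun_prop)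

variable {R R' : ℝ → ℝ → ℝ → ℝ}

theorem eqOn_pv3_lift
    (h : ∀ a b v, tanh v ≠ a * b → HasDerivAt (fun v => R a b (tanh v)) (R' a b (tanh v)) v) :
    EqOn (pv3 (lift R)) (lift R') regularSet :=
  fun _ hp => (h _ _ _ hp).deriv

theorem eqOn_px3_lift
    (h : ∀ a c x, c ≠ a * tanh x → HasDerivAt (fun x => R a (tanh x) c) (R' a (tanh x) c) x) :
    EqOn (px3 (lift R)) (lift R') regularSet :=
  fun _ hp => (h _ _ _ hp).deriv

theorem eqOn_pt3_lift
    (h : ∀ b c t, c ≠ tanh (2 * t) * b →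
      HasDerivAt (fun t => R (tanh (2 * t)) b c) (R' (tanh (2 * t)) b c) t) :
    EqOn (pt3 (lift R)) (lift R') regularSet :=
  fun _ hp => (h _ _ _ hp).deriv

/-! `ξ`, `θ` and their partial derivatives in the variables `a, b, c`: `lift xiXV` is `ξ_xv`,
and so on. Since `θ_v = ξ_x`, the derivatives `θ_v`, `θ_vv`, `θ_xv` are `xiX`, `xiXV`, `xiXX`. -/

noncomputable def xi (a b c : ℝ) : ℝ := -2 * (1 - a * b * c) / (c - a * b)

noncomputable def theta (a b c : ℝ) : ℝ := 2 * (a - b * c) / (c - a * b)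

noncomputable def xiV (a b c : ℝ) : ℝ := 2 * (1 - a ^ 2 * b ^ 2) * (1 - c ^ 2) / (c - a * b) ^ 2

noncomputable def xiX (a b c : ℝ) : ℝ := -2 * a * (1 - b ^ 2) * (1 - c ^ 2) / (c - a * b) ^ 2

noncomputable def xiT (a b c : ℝ) : ℝ := -4 * b * (1 - a ^ 2) * (1 - c ^ 2) / (c - a * b) ^ 2

noncomputable def thetaX (a b c : ℝ) : ℝ := 2 * (a ^ 2 - c ^ 2) * (1 - b ^ 2) / (c - a * b) ^ 2

noncomputable def thetaT (a b c : ℝ) : ℝ := 4 * c * (1 - a ^ 2) * (1 - b ^ 2) / (c - a * b) ^ 2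

noncomputable def xiVV (a b c : ℝ) : ℝ :=
  -4 * (1 - a * b * c) * (1 - a ^ 2 * b ^ 2) * (1 - c ^ 2) / (c - a * b) ^ 3

noncomputable def xiXV (a b c : ℝ) : ℝ :=
  4 * a * (1 - b ^ 2) * (1 - c ^ 2) * (1 - a * b * c) / (c - a * b) ^ 3

noncomputable def xiXX (a b c : ℝ) : ℝ :=
  -4 * a * (1 - b ^ 2) * (1 - c ^ 2) * (a - b * c) / (c - a * b) ^ 3

noncomputable def thetaXX (a b c : ℝ) : ℝ :=
  4 * (1 - b ^ 2) * (b * c - a) * (c ^ 2 - a ^ 2) / (c - a * b) ^ 3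

theorem hasDerivAt_xi_v (a b v : ℝ) (h : tanh v ≠ a * b) :
    HasDerivAt (fun v => xi a b (tanh v)) (xiV a b (tanh v)) v := by
  have hD := sub_ne_zero.2 h
  have hL : -(a * b) + 1 * tanh v ≠ 0 := by contrapose! h; linarith
  convert (hasDerivAt_tanh v).quadratic_div_linear_pow
      (-2) (2 * a * b) 0 (-(a * b)) 1 1 hL using 1
  · funext w; simp only [xi]; ring
  · simp only [xiV]
    rw [div_mul_eq_mul_div, div_eq_div_iff (pow_ne_zero _ hD) (pow_ne_zero _ hL)]
    ring

theorem hasDerivAt_xi_x (a c x : ℝ) (h : c ≠ a * tanh x) :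
    HasDerivAt (fun x => xi a (tanh x) c) (xiX a (tanh x) c) x := by
  have hD := sub_ne_zero.2 h
  have hL : c + -a * tanh x ≠ 0 := by contrapose! h; linarith
  convert (hasDerivAt_tanh x).quadratic_div_linear_pow
      (-2) (2 * a * c) 0 c (-a) 1 hL using 1
  · funext w; simp only [xi]; ring
  · simp only [xiX]
    rw [div_mul_eq_mul_div, div_eq_div_iff (pow_ne_zero _ hD) (pow_ne_zero _ hL)]
    ring

theorem hasDerivAt_xi_t (b c t : ℝ) (h : c ≠ tanh (2 * t) * b) :
    HasDerivAt (fun t => xi (tanh (2 * t)) b c) (xiT (tanh (2 * t)) b c) t := by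
  have hD := sub_ne_zero.2 h
  have hL : c + -b * tanh (2 * t) ≠ 0 := by contrapose! h; linarith
  convert (hasDerivAt_tanh_two_mul t).quadratic_div_linear_pow
      (-2) (2 * b * c) 0 c (-b) 1 hL using 1
  · funext w; simp only [xi]; ring
  · simp only [xiT]
    rw [div_mul_eq_mul_div, div_eq_div_iff (pow_ne_zero _ hD) (pow_ne_zero _ hL)]
    ring

theorem hasDerivAt_theta_v (a b v : ℝ) (h : tanh v ≠ a * b) :
    HasDerivAt (fun v => theta a b (tanh v)) (xiX a b (tanh v)) v := by
  have hD := sub_ne_zero.2 h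
  have hL : -(a * b) + 1 * tanh v ≠ 0 := by contrapose! h; linarith
  convert (hasDerivAt_tanh v).quadratic_div_linear_pow
      (2 * a) (-2 * b) 0 (-(a * b)) 1 1 hL using 1
  · funext w; simp only [theta]; ring
  · simp only [xiX]
    rw [div_mul_eq_mul_div, div_eq_div_iff (pow_ne_zero _ hD) (pow_ne_zero _ hL)]
    ring

theorem hasDerivAt_theta_x (a c x : ℝ) (h : c ≠ a * tanh x) :
    HasDerivAt (fun x => theta a (tanh x) c) (thetaX a (tanh x) c) x := by
  have hD := sub_ne_zero.2 h
  have hL : c + -a * tanh x ≠ 0 := by contrapose! h; linarith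
  convert (hasDerivAt_tanh x).quadratic_div_linear_pow
      (2 * a) (-2 * c) 0 c (-a) 1 hL using 1
  · funext w; simp only [theta]; ring
  · simp only [thetaX]
    rw [div_mul_eq_mul_div, div_eq_div_iff (pow_ne_zero _ hD) (pow_ne_zero _ hL)]
    ring

theorem hasDerivAt_theta_t (b c t : ℝ) (h : c ≠ tanh (2 * t) * b) :
    HasDerivAt (fun t => theta (tanh (2 * t)) b c) (thetaT (tanh (2 * t)) b c) t := by
  have hD := sub_ne_zero.2 h
  have hL : c + -b * tanh (2 * t) ≠ 0 := by contrapose! h; linarith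
  convert (hasDerivAt_tanh_two_mul t).quadratic_div_linear_pow
      (-2 * b * c) 2 0 c (-b) 1 hL using 1
  · funext w; simp only [theta]; ring
  · simp only [thetaT]
    rw [div_mul_eq_mul_div, div_eq_div_iff (pow_ne_zero _ hD) (pow_ne_zero _ hL)]
    ring

theorem hasDerivAt_xiV_v (a b v : ℝ) (h : tanh v ≠ a * b) :
    HasDerivAt (fun v => xiV a b (tanh v)) (xiVV a b (tanh v)) v := by
  have hD := sub_ne_zero.2 h
  have hL : -(a * b) + 1 * tanh v ≠ 0 := by contrapose! h; linarith
  convert (hasDerivAt_tanh v).quadratic_div_linear_pow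
      (2 * (1 - a ^ 2 * b ^ 2)) 0 (-2 * (1 - a ^ 2 * b ^ 2)) (-(a * b)) 1 2 hL using 1
  · funext w; simp only [xiV]; ring
  · simp only [xiVV]
    rw [div_mul_eq_mul_div, div_eq_div_iff (pow_ne_zero _ hD) (pow_ne_zero _ hL)]
    ring

theorem hasDerivAt_xiX_v (a b v : ℝ) (h : tanh v ≠ a * b) :
    HasDerivAt (fun v => xiX a b (tanh v)) (xiXV a b (tanh v)) v := by
  have hD := sub_ne_zero.2 h
  have hL : -(a * b) + 1 * tanh v ≠ 0 := by contrapose! h; linarith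
  convert (hasDerivAt_tanh v).quadratic_div_linear_pow
      (-2 * a * (1 - b ^ 2)) 0 (2 * a * (1 - b ^ 2)) (-(a * b)) 1 2 hL using 1
  · funext w; simp only [xiX]; ring
  · simp only [xiXV]
    rw [div_mul_eq_mul_div, div_eq_div_iff (pow_ne_zero _ hD) (pow_ne_zero _ hL)]
    ring

theorem hasDerivAt_xiX_x (a c x : ℝ) (h : c ≠ a * tanh x) :
    HasDerivAt (fun x => xiX a (tanh x) c) (xiXX a (tanh x) c) x := by
  have hD := sub_ne_zero.2 h
  have hL : c + -a * tanh x ≠ 0 := by contrapose! h; linarith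
  convert (hasDerivAt_tanh x).quadratic_div_linear_pow
      (-2 * a * (1 - c ^ 2)) 0 (2 * a * (1 - c ^ 2)) c (-a) 2 hL using 1
  · funext w; simp only [xiX]; ring
  · simp only [xiXX]
    rw [div_mul_eq_mul_div, div_eq_div_iff (pow_ne_zero _ hD) (pow_ne_zero _ hL)]
    ring

theorem hasDerivAt_thetaX_v (a b v : ℝ) (h : tanh v ≠ a * b) :
    HasDerivAt (fun v => thetaX a b (tanh v)) (xiXX a b (tanh v)) v := by
  have hD := sub_ne_zero.2 h
  have hL : -(a * b) + 1 * tanh v ≠ 0 := by contrapose! h; linarith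
  convert (hasDerivAt_tanh v).quadratic_div_linear_pow
      (2 * a ^ 2 * (1 - b ^ 2)) 0 (-2 * (1 - b ^ 2)) (-(a * b)) 1 2 hL using 1
  · funext w; simp only [thetaX]; ring
  · simp only [xiXX]
    rw [div_mul_eq_mul_div, div_eq_div_iff (pow_ne_zero _ hD) (pow_ne_zero _ hL)]
    ring

theorem hasDerivAt_thetaX_x (a c x : ℝ) (h : c ≠ a * tanh x) :
    HasDerivAt (fun x => thetaX a (tanh x) c) (thetaXX a (tanh x) c) x := by
  have hD := sub_ne_zero.2 h
  have hL : c + -a * tanh x ≠ 0 := by contrapose! h; linarith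
  convert (hasDerivAt_tanh x).quadratic_div_linear_pow
      (2 * (a ^ 2 - c ^ 2)) 0 (-2 * (a ^ 2 - c ^ 2)) c (-a) 2 hL using 1
  · funext w; simp only [thetaX]; ring
  · simp only [thetaXX]
    rw [div_mul_eq_mul_div, div_eq_div_iff (pow_ne_zero _ hD) (pow_ne_zero _ hL)]
    ring

theorem theta_eq {a b c : ℝ} (h : c ≠ a * b) (hab : 1 - (a * b) ^ 2 ≠ 0) :
    -(2 * b * (1 - a ^ 2) + a * (1 - b ^ 2) * xi a b c) / (1 - (a * b) ^ 2) = theta a b c := by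
  -- `field_simp` writes `a * b` as `b * a`, and only recognises the denominators in that form
  have hD : c - b * a ≠ 0 := sub_ne_zero.2 (mul_comm a b ▸ h)
  have hab' : 1 - b ^ 2 * a ^ 2 ≠ 0 := by rwa [mul_pow, mul_comm] at hab
  simp only [xi, theta]
  field_simp
  ring

theorem determiningSystem_identities {a b c : ℝ} (h : c ≠ a * b) :
    xiVV a b c = xi a b c * xiV a b c ∧
    xiT a b c = 2 * xiXV a b c - xiXV a b c - xiX a b c * xi a b c + theta a b c * xiV a b c -
      xi a b c * xiX a b c ∧
    thetaXX a b c = theta a b c * thetaX a b c ∧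
    thetaT a b c = 2 * xiXX a b c - xiXX a b c - xiX a b c * theta a b c +
      xi a b c * thetaX a b c - theta a b c * xiX a b c := by
  have hD : c - b * a ≠ 0 := sub_ne_zero.2 (mul_comm a b ▸ h)
  refine ⟨?_, ?_, ?_, ?_⟩ <;>
  · simp only [xi, theta, xiV, xiX, xiT, thetaX, thetaT, xiVV, xiXV, xiXX, thetaXX]
    field_simp
    ring

theorem determiningSystem_lift : DeterminingSystem (lift xi) (lift theta) regularSet := by
  have hU := isOpen_regularSet
  have hξv := eqOn_pv3_lift hasDerivAt_xi_v
  have hξx := eqOn_px3_lift hasDerivAt_xi_x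
  have hθv := eqOn_pv3_lift hasDerivAt_theta_v
  have hθx := eqOn_px3_lift hasDerivAt_theta_x
  intro p hp
  rw [(hξv.pv3 hU).trans (eqOn_pv3_lift hasDerivAt_xiV_v) hp,
    (hξx.pv3 hU).trans (eqOn_pv3_lift hasDerivAt_xiX_v) hp,
    (hξx.px3 hU).trans (eqOn_px3_lift hasDerivAt_xiX_x) hp,
    (hθv.pv3 hU).trans (eqOn_pv3_lift hasDerivAt_xiX_v) hp,
    (hθx.pv3 hU).trans (eqOn_pv3_lift hasDerivAt_thetaX_v) hp,
    (hθx.px3 hU).trans (eqOn_px3_lift hasDerivAt_thetaX_x) hp,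
    hξv hp, hξx hp, hθv hp, hθx hp,
    eqOn_pt3_lift hasDerivAt_xi_t hp, eqOn_pt3_lift hasDerivAt_theta_t hp]
  exact determiningSystem_identities hp

end TanhCoordinates

/-- Case 5 with `χ = tanh(2t)·tanh(x)` of the classification of non-Lie reduction operators
of the potential fast diffusion equation:
`ξ = −2(1 − χ tanh v)/(tanh v − χ)`, `θ = −(χ_t + χ_x ξ)/(1 − χ²)`;
note that `1 − χ² > 0` everywhere. -/
theorem reduction_operator_case5_tanh_tanh
    (χ χt χx : ℝ → ℝ → ℝ)
    (hχ : χ = fun t x => Real.tanh (2 * t) * Real.tanh x)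
    (hχt : χt = fun t x => 2 * Real.tanh x / (Real.cosh (2 * t)) ^ 2)
    (hχx : χx = fun t x => Real.tanh (2 * t) / (Real.cosh x) ^ 2)
    (ξ θ : ℝ × ℝ × ℝ → ℝ)
    (hξ : ξ = fun p =>
      -2 * (1 - χ p.1 p.2.1 * Real.tanh p.2.2) / (Real.tanh p.2.2 - χ p.1 p.2.1))
    (hθ : θ = fun p =>
      -(χt p.1 p.2.1 + χx p.1 p.2.1 * ξ p) / (1 - (χ p.1 p.2.1) ^ 2)) :
    (∀ t x : ℝ, 0 < 1 - (χ t x) ^ 2) ∧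
      DeterminingSystem ξ θ
        {p : ℝ × ℝ × ℝ | Real.tanh p.2.2 ≠ χ p.1 p.2.1} := by
  subst hχ hχt hχx hξ hθ
  refine ⟨fun t x => one_sub_sq_tanh_mul_tanh_pos (2 * t) x, ?_⟩
  refine TanhCoordinates.determiningSystem_lift.congr
    TanhCoordinates.isOpen_regularSet (fun _ _ => rfl) fun p hp => ?_
  simp only [div_cosh_sq]
  exact TanhCoordinates.theta_eq hp (one_sub_sq_tanh_mul_tanh_pos _ _).ne'
end
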